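/- Let (X, μ) be a measure space and let H be a finite-dimensional subspace of L²(X, μ; ℂ) with orthonormal basis s₁, …, s_N. For a bounded measurable function f : X → ℂ, let T(f) : H → H be the Toeplitz operator T(f)(s) = P(f·s), where P is the orthogonal projection of L²(X, μ; ℂ) onto H. Then for every linear endomorphism A of H one has tr(A ∘ T(f)*) = ∫_X conj(f(x)) · (Σ_α (A s_α)(x) · conj(s_α(x))) dμ(x), where T(f)* denotes the adjoint of T(f) with respect to the L² inner product restricted to H. (In other words, the adjoint of the Berezin–Toeplitz quantization map T, from functions with the L² pairing to End(H) with the Hilbert–Schmidt pairing ⟨A,B⟩ = tr(AB*), is given by T*(A) = Σ_α (A s_α) · conj(s_α).) -/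

import Mathlib

open MeasureTheory
open scoped ComplexConjugate

lemma trace_eq_sum_inner' {E : Type*} [NormedAddCommGroup E] [InnerProductSpace ℂ E]
    [FiniteDimensional ℂ E] {N : ℕ} (s : OrthonormalBasis (Fin N) ℂ E) (B : E →ₗ[ℂ] E) :
    LinearMap.trace ℂ E B = ∑ i, @inner ℂ _ _ (s i) (B (s i)) := by
  rw [LinearMap.trace_eq_matrix_trace ℂ s.toBasis, Matrix.trace]
  congr 1; ext i
  rw [Matrix.diag_apply, LinearMap.toMatrix_apply, s.coe_toBasis,
    s.coe_toBasis_repr_apply, s.repr_apply_apply]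

/-- Abstract form of Lemma 3.1: for the Toeplitz operator `T f = P ∘ M f` on a
finite-dimensional subspace `H` of `L²(X, μ; ℂ)` with orthonormal basis `s`, and any
endomorphism `A` of `H`, one has
`tr(A ∘ (T f)*) = ∫ conj(f x) ∑_α (A s_α)(x) conj(s_α x) dμ`.
In other words the adjoint of Berezin–Toeplitz quantization is
`T*(A) = ∑_α (A s_α) conj(s_α)`. -/
theorem stmt_0 {X : Type*} [MeasurableSpace X] (μ : Measure X)
    (H : Submodule ℂ (Lp ℂ 2 μ)) [FiniteDimensional ℂ H]
    {N : ℕ} (s : OrthonormalBasis (Fin N) ℂ ↥H)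
    (f : X → ℂ) (hf : Measurable f) (C : ℝ) (hfC : ∀ x, ‖f x‖ ≤ C)
    (Mf : Lp ℂ 2 μ →ₗ[ℂ] Lp ℂ 2 μ)
    (hMf : ∀ u : Lp ℂ 2 μ, ⇑(Mf u) =ᵐ[μ] fun x => f x * u x)
    (T : ↥H →ₗ[ℂ] ↥H)
    (hT : ∀ u : ↥H, T u = H.orthogonalProjection (Mf ↑u))
    (A : ↥H →ₗ[ℂ] ↥H) :
    LinearMap.trace ℂ ↥H (A ∘ₗ LinearMap.adjoint T) =
      ∫ x, conj (f x) *
        ∑ α, (↑(A (s α)) : Lp ℂ 2 μ) x * conj ((↑(s α) : Lp ℂ 2 μ) x) ∂μ := by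
  -- integrands for each α
  have hint : ∀ α : Fin N, Integrable
      (fun x => conj (f x) * ((↑(A (s α)) : Lp ℂ 2 μ) x * conj ((↑(s α) : Lp ℂ 2 μ) x))) μ := by
    intro α
    have h1 : Integrable (fun x => @inner ℂ _ _ ((Mf ↑(s α) : Lp ℂ 2 μ) x)
        ((↑(A (s α)) : Lp ℂ 2 μ) x)) μ := L2.integrable_inner _ _
    refine h1.congr ?_
    filter_upwards [hMf ↑(s α)] with x hx
    simp [hx, RCLike.inner_apply, map_mul]
    ring
  have key : ∀ α : Fin N,
      (@inner ℂ _ _ (T (s α)) (A (s α)) : ℂ) =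
        ∫ x, conj (f x) * ((↑(A (s α)) : Lp ℂ 2 μ) x * conj ((↑(s α) : Lp ℂ 2 μ) x)) ∂μ := by
    intro α
    rw [hT, Submodule.inner_orthogonalProjection_eq_of_mem_right, L2.inner_def]
    refine integral_congr_ae ?_
    filter_upwards [hMf ↑(s α)] with x hx
    simp [hx, RCLike.inner_apply, map_mul]
    ring
  calc LinearMap.trace ℂ ↥H (A ∘ₗ LinearMap.adjoint T)
      = LinearMap.trace ℂ ↥H (LinearMap.adjoint T ∘ₗ A) := LinearMap.trace_comp_comm' _ _
    _ = ∑ α, @inner ℂ _ _ (s α) ((LinearMap.adjoint T) (A (s α))) := trace_eq_sum_inner' s _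
    _ = ∑ α, @inner ℂ _ _ (T (s α)) (A (s α)) := by
        simp_rw [LinearMap.adjoint_inner_right]
    _ = ∑ α, ∫ x, conj (f x) *
          ((↑(A (s α)) : Lp ℂ 2 μ) x * conj ((↑(s α) : Lp ℂ 2 μ) x)) ∂μ := by
        simp_rw [key]
    _ = ∫ x, ∑ α, conj (f x) *
          ((↑(A (s α)) : Lp ℂ 2 μ) x * conj ((↑(s α) : Lp ℂ 2 μ) x)) ∂μ :=
        (integral_finset_sum _ fun α _ => hint α).symm
    _ = _ := by simp_rw [← Finset.mul_sum]
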